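/- Let m ≥ 2, let U, Û ⊆ ℝ^m be open, and let Υ : U → Û be a diffeomorphism. Let Θ¹, Θ², Θ³ : U → ℝ^m be smooth coefficient maps of one-forms satisfying the structure equations of a pseudo-spherical surface in m variables, let μ : U → ℝ be smooth, and let Θ̂¹, Θ̂², Θ̂³ : Û → ℝ^m be smooth coefficient maps such that for every index A, on U: (Υ*Θ̂¹)_A = Θ¹_A cos μ + Θ²_A sin μ, (Υ*Θ̂²)_A = −Θ¹_A sin μ + Θ²_A cos μ, and (Υ*Θ̂³)_A = Θ³_A + ∂_A μ, where (Υ*Θ̂)_A = Σ_B Θ̂_B(Υ(z))·∂_A Υ_B(z). Then Θ̂¹, Θ̂², Θ̂³ satisfy the structure equations of a pseudo-spherical surface in m variables on Û. -/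

import Mathlib

open Real

/-- Partial derivative in the `A`-th coordinate direction of `ℝ^m = Fin m → ℝ`. -/
noncomputable def pd {m : ℕ} (A : Fin m) (f : (Fin m → ℝ) → ℝ) (p : Fin m → ℝ) : ℝ :=
  fderiv ℝ f p (Pi.single A 1)

/-- The coefficient maps `Θ¹, Θ², Θ³ : V → ℝ^m` of one-forms `Θ^α = Σ_A Θ^α_A dz_A`
satisfy the structure equations of a pseudo-spherical surface in `m` variables:
`dΘ¹ = Θ³ ∧ Θ², dΘ² = Θ¹ ∧ Θ³, dΘ³ = Θ¹ ∧ Θ²`. -/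
def StructEqM {m : ℕ} (V : Set (Fin m → ℝ)) (Θ1 Θ2 Θ3 : (Fin m → ℝ) → Fin m → ℝ) : Prop :=
  ∀ p ∈ V, ∀ A B : Fin m,
    pd A (fun q => Θ1 q B) p - pd B (fun q => Θ1 q A) p
      = Θ3 p A * Θ2 p B - Θ3 p B * Θ2 p A ∧
    pd A (fun q => Θ2 q B) p - pd B (fun q => Θ2 q A) p
      = Θ1 p A * Θ3 p B - Θ1 p B * Θ3 p A ∧
    pd A (fun q => Θ3 q B) p - pd B (fun q => Θ3 q A) p
      = Θ1 p A * Θ2 p B - Θ1 p B * Θ2 p A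

open Matrix

section Toolkit
variable {m : ℕ}

lemma pd_congr_nhds {f g : (Fin m → ℝ) → ℝ} {p : Fin m → ℝ} (A : Fin m)
    (h : f =ᶠ[nhds p] g) : pd A f p = pd A g p := by
  unfold pd; rw [h.fderiv_eq]

lemma pd_add {f g : (Fin m → ℝ) → ℝ} {p : Fin m → ℝ} (A : Fin m)
    (hf : DifferentiableAt ℝ f p) (hg : DifferentiableAt ℝ g p) :
    pd A (fun q => f q + g q) p = pd A f p + pd A g p := by
  unfold pd; rw [fderiv_fun_add hf hg]; simp

lemma pd_mul {f g : (Fin m → ℝ) → ℝ} {p : Fin m → ℝ} (A : Fin m)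
    (hf : DifferentiableAt ℝ f p) (hg : DifferentiableAt ℝ g p) :
    pd A (fun q => f q * g q) p = pd A f p * g p + f p * pd A g p := by
  unfold pd; rw [fderiv_fun_mul hf hg]; simp; ring

lemma pd_neg {f : (Fin m → ℝ) → ℝ} {p : Fin m → ℝ} (A : Fin m) :
    pd A (fun q => -f q) p = -pd A f p := by
  unfold pd; rw [fderiv_fun_neg]; simp

lemma pd_sum {ι : Type*} {s : Finset ι} {f : ι → (Fin m → ℝ) → ℝ} {p : Fin m → ℝ} (A : Fin m)
    (hf : ∀ i ∈ s, DifferentiableAt ℝ (f i) p) :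
    pd A (fun q => ∑ i ∈ s, f i q) p = ∑ i ∈ s, pd A (f i) p := by
  unfold pd; rw [fderiv_fun_sum hf]; simp

lemma pd_proj {p : Fin m → ℝ} (A D : Fin m) :
    pd A (fun q => q D) p = if A = D then 1 else 0 := by
  unfold pd
  have : (fun q : Fin m → ℝ => q D) = fun q => (ContinuousLinearMap.proj (R := ℝ)
    (φ := fun _ : Fin m => ℝ) D) q := rfl
  rw [this, (ContinuousLinearMap.proj (R := ℝ) (φ := fun _ : Fin m => ℝ) D).fderiv]
  simp [Pi.single_apply, eq_comm]

lemma clm_apply_eq_sum (L : (Fin m → ℝ) →L[ℝ] ℝ) (v : Fin m → ℝ) :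
    L v = ∑ C, v C * L (Pi.single C 1) := by
  have hv : v = ∑ C, v C • (Pi.single C (1:ℝ) : Fin m → ℝ) := by
    ext j; simp [Pi.single_apply]
  conv_lhs => rw [hv]
  rw [map_sum]
  simp [smul_eq_mul]

lemma pd_cos_comp {μ : (Fin m → ℝ) → ℝ} {p : Fin m → ℝ} (A : Fin m)
    (hμ : DifferentiableAt ℝ μ p) :
    pd A (fun q => Real.cos (μ q)) p = -Real.sin (μ p) * pd A μ p := by
  unfold pd
  have h := (Real.hasDerivAt_cos (μ p)).comp_hasFDerivAt p hμ.hasFDerivAt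
  rw [show (fun q => Real.cos (μ q)) = Real.cos ∘ μ from rfl, h.fderiv]
  simp [mul_comm]

lemma pd_sin_comp {μ : (Fin m → ℝ) → ℝ} {p : Fin m → ℝ} (A : Fin m)
    (hμ : DifferentiableAt ℝ μ p) :
    pd A (fun q => Real.sin (μ q)) p = Real.cos (μ p) * pd A μ p := by
  unfold pd
  have h := (Real.hasDerivAt_sin (μ p)).comp_hasFDerivAt p hμ.hasFDerivAt
  rw [show (fun q => Real.sin (μ q)) = Real.sin ∘ μ from rfl, h.fderiv]
  simp [mul_comm]

end Toolkit
section Toolkit2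
variable {m : ℕ}

/-- Chain rule for `pd`. -/
lemma pd_comp {Υ : (Fin m → ℝ) → (Fin m → ℝ)} {g : (Fin m → ℝ) → ℝ} {q : Fin m → ℝ}
    (A : Fin m) (hΥ : DifferentiableAt ℝ Υ q) (hg : DifferentiableAt ℝ g (Υ q)) :
    pd A (fun w => g (Υ w)) q
      = ∑ C, pd C g (Υ q) * pd A (fun w => Υ w C) q := by
  have hcomp : fderiv ℝ (g ∘ Υ) q = (fderiv ℝ g (Υ q)).comp (fderiv ℝ Υ q) :=
    fderiv_comp q hg hΥ
  have hpi : ∀ v : Fin m → ℝ, ∀ C, (fderiv ℝ Υ q v) C = fderiv ℝ (fun w => Υ w C) q v := by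
    intro v C
    have h1 : fderiv ℝ (fun x (i : Fin m) => Υ x i) q
        = ContinuousLinearMap.pi (fun i => fderiv ℝ (fun w => Υ w i) q) :=
      fderiv_pi (fun i => (differentiableAt_pi.mp hΥ) i)
    have : fderiv ℝ Υ q = ContinuousLinearMap.pi (fun i => fderiv ℝ (fun w => Υ w i) q) := h1
    rw [this]; rfl
  calc pd A (fun w => g (Υ w)) q
      = fderiv ℝ g (Υ q) (fderiv ℝ Υ q (Pi.single A 1)) := by
        show fderiv ℝ (g ∘ Υ) q (Pi.single A 1) = _
        rw [hcomp]; rfl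
    _ = ∑ C, (fderiv ℝ Υ q (Pi.single A 1)) C * fderiv ℝ g (Υ q) (Pi.single C 1) :=
        clm_apply_eq_sum _ _
    _ = ∑ C, pd C g (Υ q) * pd A (fun w => Υ w C) q := by
        refine Finset.sum_congr rfl fun C _ => ?_
        rw [hpi]; unfold pd; ring

/-- Symmetry of second partial derivatives for functions `C²` at a point. -/
lemma pd_pd_symm {f : (Fin m → ℝ) → ℝ} {q : Fin m → ℝ} (A B : Fin m)
    (hf : ContDiffAt ℝ 2 f q) :
    pd A (fun w => pd B f w) q = pd B (fun w => pd A f w) q := by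
  have hsymm := hf.isSymmSndFDerivAt (by norm_num)
  have hdf : DifferentiableAt ℝ (fderiv ℝ f) q :=
    (hf.fderiv_right (m := 1) (by norm_num)).differentiableAt (by norm_num)
  have key : ∀ v : Fin m → ℝ, fderiv ℝ (fun w => fderiv ℝ f w v) q
      = (fderiv ℝ (fderiv ℝ f) q).flip v := by
    intro v
    have := fderiv_clm_apply (c := fderiv ℝ f) (u := fun _ => v) hdf
      (differentiableAt_const v)
    rw [this]
    simp
  unfold pd
  rw [key, key]
  exact hsymm _ _

/-- Differentiability from smoothness on an open set. -/
lemma diffAt_of_cd {f : (Fin m → ℝ) → ℝ} {U : Set (Fin m → ℝ)} {q : Fin m → ℝ}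
    (hf : ContDiffOn ℝ (⊤ : ℕ∞) f U) (hU : IsOpen U) (hq : q ∈ U) : DifferentiableAt ℝ f q :=
  ((hf q hq).contDiffAt (hU.mem_nhds hq)).differentiableAt (by simp)

lemma diffAt_of_cd' {f : (Fin m → ℝ) → (Fin m → ℝ)} {U : Set (Fin m → ℝ)} {q : Fin m → ℝ}
    (hf : ContDiffOn ℝ (⊤ : ℕ∞) f U) (hU : IsOpen U) (hq : q ∈ U) : DifferentiableAt ℝ f q :=
  ((hf q hq).contDiffAt (hU.mem_nhds hq)).differentiableAt (by simp)

/-- Components of a smooth map are smooth. -/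
lemma cd_comp_proj {f : (Fin m → ℝ) → (Fin m → ℝ)} {U : Set (Fin m → ℝ)}
    (hf : ContDiffOn ℝ (⊤ : ℕ∞) f U) (C : Fin m) :
    ContDiffOn ℝ (⊤ : ℕ∞) (fun w => f w C) U :=
  (contDiffOn_pi.mp hf) C

/-- `w ↦ pd A (f · C) w` is smooth on an open set where `f` is smooth. -/
lemma cd_pd {f : (Fin m → ℝ) → ℝ} {U : Set (Fin m → ℝ)}
    (hf : ContDiffOn ℝ (⊤ : ℕ∞) f U) (hU : IsOpen U) (A : Fin m) :
    ContDiffOn ℝ 1 (fun w => pd A f w) U := by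
  have h1 : ContDiffOn ℝ 1 (fderiv ℝ f) U :=
    (hf.of_le (WithTop.coe_le_coe.mpr le_top) : ContDiffOn ℝ 2 f U).fderiv_of_isOpen hU (by norm_num)
  exact h1.clm_apply contDiffOn_const

end Toolkit2
section T3
variable {m : ℕ}

lemma matrix_cancel {J K M : Matrix (Fin m) (Fin m) ℝ} (hJK : J * K = 1)
    (h : ∀ A B, ∑ C, ∑ D, M C D * J A C * J B D = 0) : ∀ C D, M C D = 0 := by
  have hKJ : K * J = 1 := mul_eq_one_comm.mp hJK
  have hMz : J * M * Jᵀ = 0 := by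
    ext A B
    have : (J * M * Jᵀ) A B = ∑ D, (∑ C, J A C * M C D) * J B D := by
      simp [Matrix.mul_apply, Matrix.transpose_apply]
    rw [this]
    rw [show (0 : Matrix (Fin m) (Fin m) ℝ) A B = 0 from rfl, ← h A B]
    rw [Finset.sum_comm]
    refine Finset.sum_congr rfl fun D _ => ?_
    rw [Finset.sum_mul]
    refine Finset.sum_congr rfl fun C _ => ?_
    ring
  have hM : M = K * (J * M * Jᵀ) * Kᵀ := by
    have h1 : K * (J * M * Jᵀ) * Kᵀ = (K * J) * M * (Jᵀ * Kᵀ) := by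
      noncomm_ring
    rw [h1, hKJ, ← Matrix.transpose_mul, hKJ]
    simp
  intro C D
  rw [hM, hMz]
  simp
end T3

section T5
variable {m : ℕ}

/-- helper: differentiability of first partials of a smooth function on an open set -/
lemma diffAt_pd {f : (Fin m → ℝ) → ℝ} {U : Set (Fin m → ℝ)} {q : Fin m → ℝ}
    (hf : ContDiffOn ℝ (⊤ : ℕ∞) f U) (hU : IsOpen U) (hq : q ∈ U) (A : Fin m) :
    DifferentiableAt ℝ (fun w => pd A f w) q :=
  (((cd_pd hf hU A) q hq).contDiffAt (hU.mem_nhds hq)).differentiableAt one_ne_zero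

/-- Key lemma: antisymmetrized derivative of the pulled-back one-form coefficients. -/
lemma pullback_dform
    {U Uh : Set (Fin m → ℝ)} (hU : IsOpen U) (hUh : IsOpen Uh)
    {Υ : (Fin m → ℝ) → (Fin m → ℝ)} (hΥ : ContDiffOn ℝ (⊤ : ℕ∞) Υ U)
    {q p : Fin m → ℝ} (hq : q ∈ U) (hp : p ∈ Uh) (hΥq : Υ q = p)
    {Θh : (Fin m → ℝ) → Fin m → ℝ} (hΘh : ContDiffOn ℝ (⊤ : ℕ∞) Θh Uh) (A B : Fin m) :
    pd A (fun w => ∑ C, Θh (Υ w) C * pd B (fun z => Υ z C) w) q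
    - pd B (fun w => ∑ C, Θh (Υ w) C * pd A (fun z => Υ z C) w) q
    = ∑ C, ∑ D, (pd C (fun y => Θh y D) p - pd D (fun y => Θh y C) p)
        * pd A (fun z => Υ z C) q * pd B (fun z => Υ z D) q := by
  have hΥd : DifferentiableAt ℝ Υ q := diffAt_of_cd' hΥ hU hq
  have hΘhC : ∀ C, DifferentiableAt ℝ (fun w => Θh (Υ w) C) q := by
    intro C
    have h1 : DifferentiableAt ℝ (fun y => Θh y C) p :=
      diffAt_of_cd (cd_comp_proj hΘh C) hUh hp
    rw [← hΥq] at h1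
    exact h1.comp q hΥd
  have hJd : ∀ (X C : Fin m), DifferentiableAt ℝ (fun w => pd X (fun z => Υ z C) w) q :=
    fun X C => diffAt_pd (cd_comp_proj hΥ C) hU hq X
  have expand : ∀ X Y : Fin m,
      pd X (fun w => ∑ C, Θh (Υ w) C * pd Y (fun z => Υ z C) w) q
      = ∑ C, ((∑ D, pd D (fun y => Θh y C) p * pd X (fun z => Υ z D) q)
            * pd Y (fun z => Υ z C) q
          + Θh p C * pd X (fun w => pd Y (fun z => Υ z C) w) q) := by
    intro X Y
    rw [pd_sum X (fun C _ => (hΘhC C).fun_mul (hJd Y C))]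
    refine Finset.sum_congr rfl fun C _ => ?_
    rw [pd_mul X (hΘhC C) (hJd Y C)]
    have hchain : pd X (fun w => Θh (Υ w) C) q
        = ∑ D, pd D (fun y => Θh y C) (Υ q) * pd X (fun z => Υ z D) q :=
      pd_comp X hΥd (by rw [hΥq]; exact diffAt_of_cd (cd_comp_proj hΘh C) hUh hp)
    rw [hchain, hΥq]
  have hsymm : ∀ C, pd A (fun w => pd B (fun z => Υ z C) w) q
      = pd B (fun w => pd A (fun z => Υ z C) w) q := by
    intro C
    have h2 : ContDiffAt ℝ 2 (fun w => Υ w C) q :=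
      ((((cd_comp_proj hΥ C) q hq).contDiffAt (hU.mem_nhds hq)) : ContDiffAt ℝ (⊤ : ℕ∞) _ q).of_le (WithTop.coe_le_coe.mpr le_top)
    exact pd_pd_symm A B h2
  rw [expand A B, expand B A, ← Finset.sum_sub_distrib]
  have step : ∀ C : Fin m,
      ((∑ D, pd D (fun y => Θh y C) p * pd A (fun z => Υ z D) q)
          * pd B (fun z => Υ z C) q
        + Θh p C * pd A (fun w => pd B (fun z => Υ z C) w) q)
      - ((∑ D, pd D (fun y => Θh y C) p * pd B (fun z => Υ z D) q)
          * pd A (fun z => Υ z C) q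
        + Θh p C * pd B (fun w => pd A (fun z => Υ z C) w) q)
      = ∑ D, pd D (fun y => Θh y C) p * pd A (fun z => Υ z D) q * pd B (fun z => Υ z C) q
        - ∑ D, pd D (fun y => Θh y C) p * pd B (fun z => Υ z D) q
            * pd A (fun z => Υ z C) q := by
    intro C
    rw [hsymm C, Finset.sum_mul, Finset.sum_mul]
    ring
  rw [Finset.sum_congr rfl (fun C _ => step C)]
  rw [Finset.sum_sub_distrib]
  have swap1 : ∑ C : Fin m, ∑ D : Fin m,
      pd D (fun y => Θh y C) p * pd A (fun z => Υ z D) q * pd B (fun z => Υ z C) q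
      = ∑ C : Fin m, ∑ D : Fin m,
      pd C (fun y => Θh y D) p * pd A (fun z => Υ z C) q * pd B (fun z => Υ z D) q := by
    rw [Finset.sum_comm]
  rw [swap1, ← Finset.sum_sub_distrib]
  refine Finset.sum_congr rfl fun C _ => ?_
  rw [← Finset.sum_sub_distrib]
  refine Finset.sum_congr rfl fun D _ => ?_
  ring
end T5

section T7
variable {m : ℕ}

lemma main_step
    {U Uh : Set (Fin m → ℝ)} (hU : IsOpen U) (hUh : IsOpen Uh)
    {Υ Ξ : (Fin m → ℝ) → (Fin m → ℝ)}
    (hΥ : ContDiffOn ℝ (⊤ : ℕ∞) Υ U) (hΞ : ContDiffOn ℝ (⊤ : ℕ∞) Ξ Uh)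
    (hinv1 : ∀ z ∈ U, Ξ (Υ z) = z)
    {q p : Fin m → ℝ} (hq : q ∈ U) (hp : p ∈ Uh) (hΥq : Υ q = p)
    {Θh σh τh : (Fin m → ℝ) → Fin m → ℝ} (hΘh : ContDiffOn ℝ (⊤ : ℕ∞) Θh Uh)
    {ω : (Fin m → ℝ) → Fin m → ℝ}
    (hpull : ∀ w ∈ U, ∀ X : Fin m,
      ∑ C, Θh (Υ w) C * pd X (fun z => Υ z C) w = ω w X)
    {sσ sτ : Fin m → ℝ}
    (hσ : ∀ X, ∑ C, σh p C * pd X (fun z => Υ z C) q = sσ X)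
    (hτ : ∀ X, ∑ C, τh p C * pd X (fun z => Υ z C) q = sτ X)
    (hω : ∀ X Y : Fin m, pd X (fun w => ω w Y) q - pd Y (fun w => ω w X) q
      = sσ X * sτ Y - sσ Y * sτ X) :
    ∀ A B, pd A (fun y => Θh y B) p - pd B (fun y => Θh y A) p
      = σh p A * τh p B - σh p B * τh p A := by
  set J : Matrix (Fin m) (Fin m) ℝ := Matrix.of fun A C => pd A (fun z => Υ z C) q with hJ
  set K : Matrix (Fin m) (Fin m) ℝ := Matrix.of fun C D => pd C (fun y => Ξ y D) p with hK
  have hΥd : DifferentiableAt ℝ Υ q := diffAt_of_cd' hΥ hU hq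
  -- J * K = 1
  have hJK : J * K = 1 := by
    ext A D
    have h1 : pd A (fun w => Ξ (Υ w) D) q = if A = D then 1 else 0 := by
      have hev : (fun w => Ξ (Υ w) D) =ᶠ[nhds q] (fun w => w D) := by
        filter_upwards [hU.mem_nhds hq] with w hw
        rw [hinv1 w hw]
      rw [pd_congr_nhds A hev, pd_proj]
    have h2 : pd A (fun w => Ξ (Υ w) D) q
        = ∑ C, pd C (fun y => Ξ y D) (Υ q) * pd A (fun z => Υ z C) q :=
      pd_comp A hΥd (by rw [hΥq]; exact diffAt_of_cd (cd_comp_proj hΞ D) hUh hp)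
    rw [h1, hΥq] at h2
    rw [Matrix.mul_apply, Matrix.one_apply, h2]
    refine Finset.sum_congr rfl fun C _ => ?_
    simp only [hJ, hK, Matrix.of_apply]
    ring
  -- the defect matrix
  set M : Matrix (Fin m) (Fin m) ℝ := Matrix.of fun C D =>
    pd C (fun y => Θh y D) p - pd D (fun y => Θh y C) p
      - (σh p C * τh p D - σh p D * τh p C) with hM
  have hzero : ∀ A B, ∑ C, ∑ D, M C D * J A C * J B D = 0 := by
    intro A B
    have hsplit : ∀ A B : Fin m, ∑ C, ∑ D, M C D * J A C * J B D
        = (∑ C, ∑ D, (pd C (fun y => Θh y D) p - pd D (fun y => Θh y C) p)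
            * pd A (fun z => Υ z C) q * pd B (fun z => Υ z D) q)
          - ∑ C, ∑ D, (σh p C * τh p D - σh p D * τh p C)
            * pd A (fun z => Υ z C) q * pd B (fun z => Υ z D) q := by
      intro A B
      rw [← Finset.sum_sub_distrib]
      refine Finset.sum_congr rfl fun C _ => ?_
      rw [← Finset.sum_sub_distrib]
      refine Finset.sum_congr rfl fun D _ => ?_
      simp only [hM, hJ, Matrix.of_apply]
      ring
    rw [hsplit]
    have hd := pullback_dform hU hUh hΥ hq hp hΥq hΘh A B
    rw [← hd]
    -- left part equals pd of ω by the pullback identity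
    have hcongr : ∀ X Y : Fin m,
        pd X (fun w => ∑ C, Θh (Υ w) C * pd Y (fun z => Υ z C) w) q
          = pd X (fun w => ω w Y) q := by
      intro X Y
      refine pd_congr_nhds X ?_
      filter_upwards [hU.mem_nhds hq] with w hw
      exact hpull w hw Y
    rw [hcongr A B, hcongr B A, hω A B]
    -- right part equals sσ/sτ wedge
    have expand2 : ∀ (a b : Fin m → ℝ) (X Y : Fin m),
        (∑ C, a C * pd X (fun z => Υ z C) q) * (∑ D, b D * pd Y (fun z => Υ z D) q)
        = ∑ C, ∑ D, a C * b D * pd X (fun z => Υ z C) q * pd Y (fun z => Υ z D) q := by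
      intro a b X Y
      rw [Finset.sum_mul_sum]
      refine Finset.sum_congr rfl fun C _ => Finset.sum_congr rfl fun D _ => ?_
      ring
    have hwedge : ∑ C, ∑ D, (σh p C * τh p D - σh p D * τh p C)
          * pd A (fun z => Υ z C) q * pd B (fun z => Υ z D) q
        = sσ A * sτ B - sσ B * sτ A := by
      rw [← hσ A, ← hτ B, ← hσ B, ← hτ A]
      rw [expand2 _ _ A B, expand2 _ _ B A]
      have hswap : ∑ C, ∑ D, σh p C * τh p D
            * pd B (fun z => Υ z C) q * pd A (fun z => Υ z D) q
          = ∑ C, ∑ D, σh p D * τh p C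
            * pd A (fun z => Υ z C) q * pd B (fun z => Υ z D) q := by
        rw [Finset.sum_comm]
        refine Finset.sum_congr rfl fun C _ => Finset.sum_congr rfl fun D _ => ?_
        ring
      rw [hswap, ← Finset.sum_sub_distrib]
      refine Finset.sum_congr rfl fun C _ => ?_
      rw [← Finset.sum_sub_distrib]
      refine Finset.sum_congr rfl fun D _ => ?_
      ring
    rw [hwedge]
    ring
  have := matrix_cancel hJK hzero
  intro A B
  have hAB := this A B
  simp only [hM, Matrix.of_apply] at hAB
  linarith
end T7

/-- if a coframe `Θ̂` pulls back under a diffeomorphism `Υ` to a rotation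
(by `μ`) of a coframe `Θ` satisfying the structure equations, then `Θ̂` also satisfies
the structure equations. -/
theorem structure_equations_invariant_under_pullback_rotation
    (m : ℕ) (hm : 2 ≤ m)
    (U Uh : Set (Fin m → ℝ)) (hU : IsOpen U) (hUh : IsOpen Uh)
    (Υ Ξ : (Fin m → ℝ) → (Fin m → ℝ))
    (hΥ : ContDiffOn ℝ (⊤ : ℕ∞) Υ U) (hΞ : ContDiffOn ℝ (⊤ : ℕ∞) Ξ Uh)
    (hbij : Set.BijOn Υ U Uh)
    (hinv1 : ∀ z ∈ U, Ξ (Υ z) = z) (hinv2 : ∀ w ∈ Uh, Υ (Ξ w) = w)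
    (Θ1 Θ2 Θ3 : (Fin m → ℝ) → Fin m → ℝ)
    (hΘ1 : ContDiffOn ℝ (⊤ : ℕ∞) Θ1 U) (hΘ2 : ContDiffOn ℝ (⊤ : ℕ∞) Θ2 U) (hΘ3 : ContDiffOn ℝ (⊤ : ℕ∞) Θ3 U)
    (hstruct : StructEqM U Θ1 Θ2 Θ3)
    (μ : (Fin m → ℝ) → ℝ) (hμ : ContDiffOn ℝ (⊤ : ℕ∞) μ U)
    (Θh1 Θh2 Θh3 : (Fin m → ℝ) → Fin m → ℝ)
    (hΘh1 : ContDiffOn ℝ (⊤ : ℕ∞) Θh1 Uh) (hΘh2 : ContDiffOn ℝ (⊤ : ℕ∞) Θh2 Uh)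
    (hΘh3 : ContDiffOn ℝ (⊤ : ℕ∞) Θh3 Uh)
    (hpull : ∀ q ∈ U, ∀ A : Fin m,
      (∑ B : Fin m, Θh1 (Υ q) B * pd A (fun z => Υ z B) q)
        = Θ1 q A * Real.cos (μ q) + Θ2 q A * Real.sin (μ q) ∧
      (∑ B : Fin m, Θh2 (Υ q) B * pd A (fun z => Υ z B) q)
        = -Θ1 q A * Real.sin (μ q) + Θ2 q A * Real.cos (μ q) ∧
      (∑ B : Fin m, Θh3 (Υ q) B * pd A (fun z => Υ z B) q)
        = Θ3 q A + pd A μ q) :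
    StructEqM Uh Θh1 Θh2 Θh3 := by
  intro p hp A B
  obtain ⟨z, hz, hzp⟩ := hbij.surjOn hp
  set q : Fin m → ℝ := Ξ p with hqdef
  have hq : q ∈ U := by rw [hqdef, ← hzp, hinv1 z hz]; exact hz
  have hΥq : Υ q = p := hinv2 p hp
  -- differentiability at q
  have hdΘ1 : ∀ Y, DifferentiableAt ℝ (fun w => Θ1 w Y) q :=
    fun Y => diffAt_of_cd (cd_comp_proj hΘ1 Y) hU hq
  have hdΘ2 : ∀ Y, DifferentiableAt ℝ (fun w => Θ2 w Y) q :=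
    fun Y => diffAt_of_cd (cd_comp_proj hΘ2 Y) hU hq
  have hdΘ3 : ∀ Y, DifferentiableAt ℝ (fun w => Θ3 w Y) q :=
    fun Y => diffAt_of_cd (cd_comp_proj hΘ3 Y) hU hq
  have hdμ : DifferentiableAt ℝ μ q := diffAt_of_cd hμ hU hq
  have hdcos : DifferentiableAt ℝ (fun w => Real.cos (μ w)) q :=
    Real.differentiable_cos.differentiableAt.comp q hdμ
  have hdsin : DifferentiableAt ℝ (fun w => Real.sin (μ w)) q :=
    Real.differentiable_sin.differentiableAt.comp q hdμ
  have hdpdμ : ∀ X, DifferentiableAt ℝ (fun w => pd X μ w) q :=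
    fun X => diffAt_pd hμ hU hq X
  -- first derivatives of the rotated forms
  have hpdω1 : ∀ X Y : Fin m,
      pd X (fun w => Θ1 w Y * Real.cos (μ w) + Θ2 w Y * Real.sin (μ w)) q
      = pd X (fun w => Θ1 w Y) q * Real.cos (μ q)
        + Θ1 q Y * (-Real.sin (μ q) * pd X μ q)
        + (pd X (fun w => Θ2 w Y) q * Real.sin (μ q)
        + Θ2 q Y * (Real.cos (μ q) * pd X μ q)) := by
    intro X Y
    rw [pd_add X ((hdΘ1 Y).fun_mul hdcos) ((hdΘ2 Y).fun_mul hdsin),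
      pd_mul X (hdΘ1 Y) hdcos, pd_mul X (hdΘ2 Y) hdsin,
      pd_cos_comp X hdμ, pd_sin_comp X hdμ]
  have hpdω2 : ∀ X Y : Fin m,
      pd X (fun w => -Θ1 w Y * Real.sin (μ w) + Θ2 w Y * Real.cos (μ w)) q
      = -pd X (fun w => Θ1 w Y) q * Real.sin (μ q)
        + -Θ1 q Y * (Real.cos (μ q) * pd X μ q)
        + (pd X (fun w => Θ2 w Y) q * Real.cos (μ q)
        + Θ2 q Y * (-Real.sin (μ q) * pd X μ q)) := by
    intro X Y
    have hneg : ∀ Y, pd X (fun w => -Θ1 w Y) q = -pd X (fun w => Θ1 w Y) q :=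
      fun Y => pd_neg X
    rw [pd_add X ((hdΘ1 Y).fun_neg.fun_mul hdsin) ((hdΘ2 Y).fun_mul hdcos),
      pd_mul X (hdΘ1 Y).fun_neg hdsin, pd_mul X (hdΘ2 Y) hdcos,
      pd_cos_comp X hdμ, pd_sin_comp X hdμ, hneg Y]
  have hpdω3 : ∀ X Y : Fin m,
      pd X (fun w => Θ3 w Y + pd Y μ w) q
      = pd X (fun w => Θ3 w Y) q + pd X (fun w => pd Y μ w) q := by
    intro X Y
    rw [pd_add X (hdΘ3 Y) (hdpdμ Y)]
  have hμC2 : ContDiffAt ℝ 2 μ q :=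
    (((hμ q hq).contDiffAt (hU.mem_nhds hq)) : ContDiffAt ℝ (⊤ : ℕ∞) μ q).of_le (WithTop.coe_le_coe.mpr le_top)
  have hpyth := Real.sin_sq_add_cos_sq (μ q)
  refine ⟨?_, ?_, ?_⟩
  · -- dΘ̂1 = Θ̂3 ∧ Θ̂2
    refine main_step hU hUh hΥ hΞ hinv1 hq hp hΥq hΘh1
      (ω := fun w X => Θ1 w X * Real.cos (μ w) + Θ2 w X * Real.sin (μ w))
      (fun w hw X => (hpull w hw X).1)
      (sσ := fun X => Θ3 q X + pd X μ q)
      (sτ := fun X => -Θ1 q X * Real.sin (μ q) + Θ2 q X * Real.cos (μ q))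
      (fun X => by show _ = _; rw [← hΥq]; exact (hpull q hq X).2.2)
      (fun X => by show _ = _; rw [← hΥq]; exact (hpull q hq X).2.1)
      ?_ A B
    intro X Y
    rw [hpdω1 X Y, hpdω1 Y X]
    obtain ⟨e1, e2, e3⟩ := hstruct q hq X Y
    linear_combination Real.cos (μ q) * e1 + Real.sin (μ q) * e2
  · -- dΘ̂2 = Θ̂1 ∧ Θ̂3
    refine main_step hU hUh hΥ hΞ hinv1 hq hp hΥq hΘh2
      (ω := fun w X => -Θ1 w X * Real.sin (μ w) + Θ2 w X * Real.cos (μ w))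
      (fun w hw X => (hpull w hw X).2.1)
      (sσ := fun X => Θ1 q X * Real.cos (μ q) + Θ2 q X * Real.sin (μ q))
      (sτ := fun X => Θ3 q X + pd X μ q)
      (fun X => by show _ = _; rw [← hΥq]; exact (hpull q hq X).1)
      (fun X => by show _ = _; rw [← hΥq]; exact (hpull q hq X).2.2)
      ?_ A B
    intro X Y
    rw [hpdω2 X Y, hpdω2 Y X]
    obtain ⟨e1, e2, e3⟩ := hstruct q hq X Y
    linear_combination (-(Real.sin (μ q))) * e1 + Real.cos (μ q) * e2
  · -- dΘ̂3 = Θ̂1 ∧ Θ̂2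
    refine main_step hU hUh hΥ hΞ hinv1 hq hp hΥq hΘh3
      (ω := fun w X => Θ3 w X + pd X μ w)
      (fun w hw X => (hpull w hw X).2.2)
      (sσ := fun X => Θ1 q X * Real.cos (μ q) + Θ2 q X * Real.sin (μ q))
      (sτ := fun X => -Θ1 q X * Real.sin (μ q) + Θ2 q X * Real.cos (μ q))
      (fun X => by show _ = _; rw [← hΥq]; exact (hpull q hq X).1)
      (fun X => by show _ = _; rw [← hΥq]; exact (hpull q hq X).2.1)
      ?_ A B
    intro X Y
    rw [hpdω3 X Y, hpdω3 Y X]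
    obtain ⟨e1, e2, e3⟩ := hstruct q hq X Y
    have hsμ : pd X (fun w => pd Y μ w) q = pd Y (fun w => pd X μ w) q :=
      pd_pd_symm X Y hμC2
    linear_combination e3 + hsμ - (Θ1 q X * Θ2 q Y - Θ1 q Y * Θ2 q X) * hpyth
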